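/- arXiv:1901.10292 — 3 statements merged into one kernel-verified Lean document; each statement's English description precedes it below -/
import Mathlib

section
/- The semigroup (T(t))_{t≥0} on X = L^∞([0,1], ℓ¹) defined by (T(t)f)(s) = Bⁿ f(t+s−n) for n ≤ t+s < n+1 (with B column-stochastic on ℓ¹) is strongly continuous with respect to the weak*-topology induced by the predual L¹([0,1], c₀): for every f ∈ X and g ∈ L¹([0,1], c₀), ⟨T(t)f − f, g⟩ → 0 as t → 0⁺. -/
/-!
Let `F` be `f` extended by zero outside `[0,1]`. For `0 < t < 1` and `s ∈ [0,1]`,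
`T(t)f(s) - f(s) = F(t+s) - F(s) + 1_{[1-t,1]}(s) (B F(t-1+s) - F(t+s))`.
The second summand is bounded by `(‖B‖ + 1) ‖f‖_∞`, so its pairing with `g` is at most a constant
times `∫_{1-t}^1 ‖g‖`, which tends to `0`. In the first one the translation can be moved onto `g`:
its pairing is at most `‖f‖_∞ ‖g(· - t) - g‖_{L¹}`, which tends to `0` because translation acts
continuously on `L¹`.
-/

open MeasureTheory Set Filter
open scoped NNReal ENNReal ZeroAtInfty

instance : Fact ((1 : ℝ≥0∞) ≤ 1) := ⟨le_rfl⟩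

/-- The flow semigroup on `L^∞([0,1], ℓ¹)`: `(T(t)f)(s) = Bⁿ f(t+s−n)` for `n ≤ t+s < n+1`. -/
noncomputable def networkFlow
    (B : lp (fun _ : ℕ => ℝ) 1 →L[ℝ] lp (fun _ : ℕ => ℝ) 1)
    (t : ℝ) (f : ℝ → lp (fun _ : ℕ => ℝ) 1) : ℝ → lp (fun _ : ℕ => ℝ) 1 :=
  fun s => (B ^ ⌊t + s⌋₊) (f (t + s - ⌊t + s⌋₊))

open Topology

lemma lp.hasSum_norm_one {ι : Type*} {E : ι → Type*} [∀ i, NormedAddCommGroup (E i)]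
    (x : lp E 1) : HasSum (fun i => ‖x i‖) ‖x‖ := by
  simpa using lp.hasSum_norm (p := 1) one_pos x

section LpOnePairing

variable {ι : Type*} [TopologicalSpace ι]

lemma norm_mul_le_of_lp_one (x : lp (fun _ : ι => ℝ) 1) (y : C₀(ι, ℝ)) (j : ι) :
    ‖x j * y j‖ ≤ ‖x j‖ * ‖y‖ := by
  rw [norm_mul]
  exact mul_le_mul_of_nonneg_left (y.toBCF.norm_coe_le_norm j) (norm_nonneg _)

lemma summable_mul_of_lp_one (x : lp (fun _ : ι => ℝ) 1) (y : C₀(ι, ℝ)) :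
    Summable (fun j => x j * y j) :=
  Summable.of_norm_bounded ((lp.hasSum_norm_one x).mul_right ‖y‖).summable
    (norm_mul_le_of_lp_one x y)

lemma norm_tsum_mul_le_of_lp_one (x : lp (fun _ : ι => ℝ) 1) (y : C₀(ι, ℝ)) :
    ‖∑' j, x j * y j‖ ≤ ‖x‖ * ‖y‖ :=
  tsum_of_norm_bounded ((lp.hasSum_norm_one x).mul_right ‖y‖) (norm_mul_le_of_lp_one x y)

noncomputable def lpOnePairing : lp (fun _ : ι => ℝ) 1 →L[ℝ] C₀(ι, ℝ) →L[ℝ] ℝ :=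
  LinearMap.mkContinuous₂
    (LinearMap.mk₂ ℝ (fun x y => ∑' j, x j * y j)
      (fun x x' y => by
        simp only [lp.coeFn_add, Pi.add_apply, add_mul]
        exact (summable_mul_of_lp_one x y).tsum_add (summable_mul_of_lp_one x' y))
      (fun c x y => by
        simp only [lp.coeFn_smul, Pi.smul_apply, smul_eq_mul, mul_assoc, tsum_mul_left])
      (fun x y y' => by
        simp only [ZeroAtInftyContinuousMap.coe_add, Pi.add_apply, mul_add]
        exact (summable_mul_of_lp_one x y).tsum_add (summable_mul_of_lp_one x y'))
      (fun c x y => by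
        simp only [ZeroAtInftyContinuousMap.coe_smul, Pi.smul_apply, smul_eq_mul,
          mul_left_comm _ c, tsum_mul_left]))
    1 (fun x y => by simpa [mul_assoc] using norm_tsum_mul_le_of_lp_one x y)

lemma norm_lpOnePairing_apply_le (x : lp (fun _ : ι => ℝ) 1) (y : C₀(ι, ℝ)) :
    ‖lpOnePairing x y‖ ≤ ‖x‖ * ‖y‖ :=
  norm_tsum_mul_le_of_lp_one x y

end LpOnePairing

lemma MemLp.exists_ae_norm_le {α E : Type*} [MeasurableSpace α] {μ : Measure α}
    [NormedAddCommGroup E] {f : α → E} (hf : MemLp f ∞ μ) : ∃ M : ℝ, ∀ᵐ x ∂μ, ‖f x‖ ≤ M := by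
  refine ⟨(eLpNorm f ∞ μ).toReal, ?_⟩
  filter_upwards [ae_le_eLpNormEssSup (f := f) (μ := μ)] with x hx
  have hfin : eLpNormEssSup f μ ≠ ∞ := by simpa [eLpNorm_exponent_top] using hf.2.ne
  simpa [eLpNorm_exponent_top] using ENNReal.toReal_mono hfin hx

section BoundedPairing

variable {α E F : Type*} [MeasurableSpace α] {μ : Measure α}
  [NormedAddCommGroup E] [NormedSpace ℝ E] [NormedAddCommGroup F] [NormedSpace ℝ F]
  {L : E →L[ℝ] F →L[ℝ] ℝ} {f : α → E} {g : α → F} {M : ℝ}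

lemma integrable_pairing_of_ae_bound (hL : ∀ x y, ‖L x y‖ ≤ ‖x‖ * ‖y‖)
    (hf : AEStronglyMeasurable f μ) (hfM : ∀ᵐ x ∂μ, ‖f x‖ ≤ M) (hg : Integrable g μ) :
    Integrable (fun x => L (f x) (g x)) μ :=
  (hg.norm.const_mul M).mono' (L.aestronglyMeasurable_comp₂ hf hg.1) <| by
    filter_upwards [hfM] with x hx
    exact (hL _ _).trans (mul_le_mul_of_nonneg_right hx (norm_nonneg _))

lemma norm_integral_pairing_le (hL : ∀ x y, ‖L x y‖ ≤ ‖x‖ * ‖y‖)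
    (hfM : ∀ᵐ x ∂μ, ‖f x‖ ≤ M) (hg : Integrable g μ) :
    ‖∫ x, L (f x) (g x) ∂μ‖ ≤ M * ∫ x, ‖g x‖ ∂μ := by
  rw [← integral_const_mul]
  refine norm_integral_le_of_norm_le (hg.norm.const_mul M) ?_
  filter_upwards [hfM] with x hx
  exact (hL _ _).trans (mul_le_mul_of_nonneg_right hx (norm_nonneg _))

theorem tendsto_integral_pairing_indicator {ι : Type*} {l : Filter ι}
    (hL : ∀ x y, ‖L x y‖ ≤ ‖x‖ * ‖y‖) {s : ι → Set α} (hs : ∀ i, MeasurableSet (s i))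
    (hμs : Tendsto (fun i => μ (s i)) l (𝓝 0)) {h : ι → α → E}
    (hhM : ∀ i, ∀ᵐ x ∂μ, ‖h i x‖ ≤ M) (hg : Integrable g μ) :
    Tendsto (fun i => ∫ x, L ((s i).indicator (h i) x) (g x) ∂μ) l (𝓝 0) := by
  have hset : ∀ i, ∫ x, L ((s i).indicator (h i) x) (g x) ∂μ = ∫ x in s i, L (h i x) (g x) ∂μ := by
    intro i
    rw [← integral_indicator (hs i)]
    congr 1 with x
    by_cases hx : x ∈ s i <;> simp [hx]
  have hbound : Tendsto (fun i => M * ∫ x in s i, ‖g x‖ ∂μ) l (𝓝 0) := by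
    simpa using (hg.norm.tendsto_setIntegral_nhds_zero hμs).const_mul M
  refine squeeze_zero_norm (fun i => ?_) hbound
  rw [hset]
  exact norm_integral_pairing_le hL (ae_restrict_of_ae (hhM i)) hg.restrict

end BoundedPairing

section Translation

variable {G E F : Type*} [AddGroup G] [TopologicalSpace G] [IsTopologicalAddGroup G]
  [MeasurableSpace G] [BorelSpace G] {μ : Measure G} [μ.IsAddLeftInvariant]
  [IsLocallyFiniteMeasure μ] [μ.InnerRegularCompactLTTop]
  [NormedAddCommGroup E] [NormedAddCommGroup F]

theorem tendsto_integral_norm_comp_add_sub {g : G → F} (hg : Integrable g μ) :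
    Tendsto (fun t => ∫ x, ‖g (t + x) - g x‖ ∂μ) (𝓝 0) (𝓝 0) := by
  have : Fact ((1 : ℝ≥0∞) ≠ ∞) := ⟨ENNReal.one_ne_top⟩
  set φ : Lp F 1 μ := hg.toL1 g
  have hφ : Tendsto (fun t : G => DomAddAct.mk t +ᵥ φ) (𝓝 0) (𝓝 φ) := by
    have hcont : Continuous fun t : G => DomAddAct.mk t +ᵥ φ :=
      (DomAddAct.mkHomeomorph.continuous).vadd continuous_const
    simpa using hcont.tendsto 0
  rw [tendsto_iff_dist_tendsto_zero] at hφ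
  refine hφ.congr fun t => ?_
  rw [dist_eq_norm, L1.norm_eq_integral_norm]
  have htr : (fun x => φ (t + x)) =ᵐ[μ] fun x => g (t + x) :=
    (measurePreserving_add_left μ t).quasiMeasurePreserving.ae_eq_comp hg.coeFn_toL1
  refine integral_congr_ae ?_
  filter_upwards [Lp.coeFn_sub (DomAddAct.mk t +ᵥ φ) φ,
    DomAddAct.vadd_Lp_ae_eq (DomAddAct.mk t) φ, htr, hg.coeFn_toL1] with x hsub hvadd htx hx
  rw [hsub, Pi.sub_apply, hvadd, hx]
  simpa using congrArg (fun y => ‖y - g x‖) htx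

variable [NormedSpace ℝ E] [NormedSpace ℝ F] {L : E →L[ℝ] F →L[ℝ] ℝ} {f : G → E} {g : G → F}
  {M : ℝ}

theorem tendsto_integral_pairing_comp_add_sub (hL : ∀ x y, ‖L x y‖ ≤ ‖x‖ * ‖y‖)
    (hf : AEStronglyMeasurable f μ) (hfM : ∀ᵐ x ∂μ, ‖f x‖ ≤ M) (hg : Integrable g μ) :
    Tendsto (fun t => ∫ x, L (f (t + x) - f x) (g x) ∂μ) (𝓝 0) (𝓝 0) := by
  have hshift : ∀ t, ∫ x, L (f (t + x) - f x) (g x) ∂μ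
      = ∫ x, L (f x) (g (-t + x) - g x) ∂μ := by
    intro t
    have hqmp := (measurePreserving_add_left μ t).quasiMeasurePreserving
    have hft := integrable_pairing_of_ae_bound hL (hf.comp_quasiMeasurePreserving hqmp)
      (hqmp.ae hfM) hg
    have hf0 := integrable_pairing_of_ae_bound hL hf hfM hg
    have hgt := integrable_pairing_of_ae_bound hL hf hfM (hg.comp_add_left (-t))
    calc ∫ x, L (f (t + x) - f x) (g x) ∂μ
        = ∫ x, L (f (t + x)) (g x) ∂μ - ∫ x, L (f x) (g x) ∂μ := by
          simp only [map_sub, sub_apply]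
          exact integral_sub hft hf0
      _ = ∫ x, L (f x) (g (-t + x)) ∂μ - ∫ x, L (f x) (g x) ∂μ := by
          rw [← integral_add_left_eq_self (fun x => L (f x) (g (-t + x))) t]
          simp only [neg_add_cancel_left]
      _ = ∫ x, L (f x) (g (-t + x) - g x) ∂μ := by
          simp only [map_sub]
          exact (integral_sub hgt hf0).symm
  have hbound : Tendsto (fun t => M * ∫ x, ‖g (-t + x) - g x‖ ∂μ) (𝓝 0) (𝓝 0) := by
    simpa using ((tendsto_integral_norm_comp_add_sub hg).comp
      (by simpa using (tendsto_neg (0 : G)))).const_mul M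
  refine squeeze_zero_norm (fun t => ?_) hbound
  rw [hshift]
  exact norm_integral_pairing_le hL hfM ((hg.comp_add_left (-t)).sub hg)

theorem tendsto_integral_pairing_comp_add_sub_add_indicator
    (hL : ∀ x y, ‖L x y‖ ≤ ‖x‖ * ‖y‖) (hf : AEStronglyMeasurable f μ)
    (hfM : ∀ᵐ x ∂μ, ‖f x‖ ≤ M) {h : G → G → E} {M' : ℝ}
    (hh : ∀ t, AEStronglyMeasurable (h t) μ) (hhM : ∀ t, ∀ᵐ x ∂μ, ‖h t x‖ ≤ M')
    {s : G → Set G} (hs : ∀ t, MeasurableSet (s t)) (hμs : Tendsto (fun t => μ (s t)) (𝓝 0) (𝓝 0))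
    (hg : Integrable g μ) :
    Tendsto (fun t => ∫ x, L (f (t + x) - f x + (s t).indicator (h t) x) (g x) ∂μ)
      (𝓝 0) (𝓝 0) := by
  have hsplit : ∀ t, ∫ x, L (f (t + x) - f x + (s t).indicator (h t) x) (g x) ∂μ
      = ∫ x, L (f (t + x) - f x) (g x) ∂μ + ∫ x, L ((s t).indicator (h t) x) (g x) ∂μ := by
    intro t
    have hqmp := (measurePreserving_add_left μ t).quasiMeasurePreserving
    have htr : ∀ᵐ x ∂μ, ‖f (t + x) - f x‖ ≤ M + M := by
      filter_upwards [hqmp.ae hfM, hfM] with x h1 h2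
      exact (norm_sub_le _ _).trans (add_le_add h1 h2)
    have hind : ∀ᵐ x ∂μ, ‖(s t).indicator (h t) x‖ ≤ max M' 0 := by
      filter_upwards [hhM t] with x hx
      by_cases hxs : x ∈ s t <;> simp [hxs, hx]
    simp only [map_add, add_apply]
    exact integral_add
      (integrable_pairing_of_ae_bound hL
        ((hf.comp_quasiMeasurePreserving hqmp).sub hf) htr hg)
      (integrable_pairing_of_ae_bound hL ((hh t).indicator (hs t)) hind hg)
  simp only [hsplit]
  simpa using (tendsto_integral_pairing_comp_add_sub hL hf hfM hg).add
    (tendsto_integral_pairing_indicator hL hs hμs hhM hg)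

end Translation

lemma networkFlow_sub_eq (B : lp (fun _ : ℕ => ℝ) 1 →L[ℝ] lp (fun _ : ℕ => ℝ) 1)
    (f : ℝ → lp (fun _ : ℕ => ℝ) 1) {t s : ℝ} (ht : t ∈ Ico (0 : ℝ) 1) (hs : s ∈ Icc (0 : ℝ) 1) :
    networkFlow B t f s - f s = (Icc 0 1).indicator f (t + s) - (Icc 0 1).indicator f s
      + (Icc (1 - t) 1).indicator
          (fun x => B ((Icc 0 1).indicator f (t - 1 + x)) - (Icc 0 1).indicator f (t + x)) s := by
  rw [indicator_of_mem hs]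
  obtain ⟨ht0, ht1⟩ := ht
  obtain ⟨hs0, hs1⟩ := hs
  by_cases hst : t + s < 1
  · have hfloor : ⌊t + s⌋₊ = 0 := Nat.floor_eq_zero.2 hst
    rw [indicator_of_notMem (fun h : s ∈ Icc (1 - t) 1 => by linarith [h.1]),
      indicator_of_mem (mem_Icc.2 ⟨by linarith, hst.le⟩)]
    simp [networkFlow, hfloor]
  · have hfloor : ⌊t + s⌋₊ = 1 := by
      rw [Nat.floor_eq_iff (by linarith)]
      constructor <;> push_cast <;> linarith
    rw [indicator_of_mem (mem_Icc.2 ⟨by linarith, hs1⟩),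
      indicator_of_mem (mem_Icc.2 ⟨by linarith, by linarith⟩ : t - 1 + s ∈ Icc (0 : ℝ) 1)]
    simp [networkFlow, hfloor, sub_add_eq_add_sub]

theorem stmt_9_general
    (B : lp (fun _ : ℕ => ℝ) 1 →L[ℝ] lp (fun _ : ℕ => ℝ) 1)
    (f : ℝ → lp (fun _ : ℕ => ℝ) 1) (hf : MemLp f ∞ (volume.restrict (Icc (0 : ℝ) 1)))
    (g : ℝ → C₀(ℕ, ℝ)) (hg : IntegrableOn g (Icc (0 : ℝ) 1)) :
    Tendsto (fun t : ℝ =>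
        ∫ s in Icc (0 : ℝ) 1, ∑' j : ℕ, (networkFlow B t f s j - f s j) * g s j)
      (nhdsWithin 0 (Ioi 0)) (nhds 0) := by
  set F := (Icc (0 : ℝ) 1).indicator f
  obtain ⟨M, hM⟩ : ∃ M : ℝ, ∀ᵐ x, ‖F x‖ ≤ M :=
    MemLp.exists_ae_norm_le ((memLp_indicator_iff_restrict (f := f) measurableSet_Icc).2 hf)
  have hF : AEStronglyMeasurable F volume :=
    (aestronglyMeasurable_indicator_iff measurableSet_Icc).2 hf.1
  have hqmp (c : ℝ) := (measurePreserving_add_left volume c).quasiMeasurePreserving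
  have hR : ∀ t, AEStronglyMeasurable (fun x => B (F (t - 1 + x)) - F (t + x)) volume := fun t =>
    (B.continuous.comp_aestronglyMeasurable (hF.comp_quasiMeasurePreserving (hqmp _))).sub
      (hF.comp_quasiMeasurePreserving (hqmp t))
  have hRM : ∀ t, ∀ᵐ x, ‖B (F (t - 1 + x)) - F (t + x)‖ ≤ ‖B‖ * M + M := fun t => by
    filter_upwards [(hqmp (t - 1)).ae hM, (hqmp t).ae hM] with x h1 h2
    exact (norm_sub_le _ _).trans (add_le_add ((B.le_opNorm _).trans (by gcongr)) h2)
  have hvol : Tendsto (fun t : ℝ => volume (Icc (1 - t) 1)) (𝓝 0) (𝓝 0) := by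
    simpa using ENNReal.tendsto_ofReal (tendsto_id (x := 𝓝 (0 : ℝ)))
  have hlim := tendsto_integral_pairing_comp_add_sub_add_indicator norm_lpOnePairing_apply_le
    hF hM hR hRM (fun _ => measurableSet_Icc) hvol (hg.integrable_indicator measurableSet_Icc)
  refine (hlim.mono_left nhdsWithin_le_nhds).congr' ?_
  filter_upwards [Ioo_mem_nhdsGT one_pos] with t ht
  rw [← integral_indicator measurableSet_Icc]
  congr 1 with s
  by_cases hs : s ∈ Icc (0 : ℝ) 1
  · rw [indicator_of_mem hs, indicator_of_mem hs,
      ← networkFlow_sub_eq B f (Ioo_subset_Ico_self ht) hs]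
    rfl
  · simp [indicator_of_notMem hs]

/-- The semigroup `(T(t))_{t≥0}` on `X = L^∞([0,1], ℓ¹)`, `(T(t)f)(s) = Bⁿ f(t+s−n)` with `B`
column-stochastic on `ℓ¹`, is strongly continuous for the weak*-topology induced by the predual
`L¹([0,1], c₀)`: for every `f ∈ X` and `g ∈ L¹([0,1], c₀)`, `⟨T(t)f − f, g⟩ → 0` as `t → 0⁺`,
where `⟨f,g⟩ = ∫₀¹ ⟨f(s), g(s)⟩ ds` is the duality pairing between `ℓ¹ = (c₀)'` and `c₀`. -/
theorem stmt_9 (b : ℕ → ℕ → ℝ) (hpos : ∀ i j, 0 ≤ b i j)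
    (hcol : ∀ j, HasSum (fun i => b i j) 1)
    (B : lp (fun _ : ℕ => ℝ) 1 →L[ℝ] lp (fun _ : ℕ => ℝ) 1)
    (hB : ∀ (x : lp (fun _ : ℕ => ℝ) 1) (i : ℕ), B x i = ∑' j, b i j * x j)
    (f : ℝ → lp (fun _ : ℕ => ℝ) 1) (hf : MemLp f ∞ (volume.restrict (Icc (0 : ℝ) 1)))
    (g : ℝ → C₀(ℕ, ℝ)) (hg : IntegrableOn g (Icc (0 : ℝ) 1)) :
    Tendsto (fun t : ℝ =>
        ∫ s in Icc (0 : ℝ) 1, ∑' j : ℕ, (networkFlow B t f s j - f s j) * g s j)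
      (nhdsWithin 0 (Ioi 0)) (nhds 0) :=
  stmt_9_general B f hf g hg
end

section
/- For Re(λ) > 0 and a column-stochastic matrix B on ℓ¹, the series ∑_{k=0}^∞ e^{−λk} ∫₀¹ e^{−λ(t+1−s)} B^{k+1} f(t) dt converges absolutely in ℓ¹ for every f ∈ L^∞([0,1], ℓ¹) and every s ∈ [0,1], and the resulting function R(λ)f, given by (R(λ)f)(s) = ∑_{k=0}^∞ e^{−λk} ∫₀¹ e^{−λ(t+1−s)} B^{k+1} f(t) dt + ∫_s¹ e^{λ(s−t)} f(t) dt, defines a bounded linear operator R(λ) on L^∞([0,1], ℓ¹). -/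
/-! Since `‖B‖ ≤ 1` and `|e^{−λk}| = e^{−k Re λ}`, the `k`-th term of the series is bounded by
`e^{−k Re λ} ∫₀¹ ‖f‖`, a geometric series; both integral kernels have modulus at most `1` on their
domains. Hence `‖(R(λ)f)(s)‖ ≤ ((1 − e^{−Re λ})⁻¹ + 1) ‖f‖_∞`. Linearity holds termwise, after
`B^{k+1}` is pulled out of the integrals. -/

open MeasureTheory Set Filter
open scoped NNReal ENNReal

/-- The candidate resolvent `(R(λ)f)(s) = ∑_{k=0}^∞ e^{−λk} ∫₀¹ e^{−λ(t+1−s)} B^{k+1} f(t) dt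
+ ∫_s¹ e^{λ(s−t)} f(t) dt` on `L^∞([0,1], ℓ¹)`. -/
noncomputable def resolventFormula {J : Type*}
    (lam : ℂ) (B : lp (fun _ : J => ℂ) 1 →L[ℂ] lp (fun _ : J => ℂ) 1)
    (f : ℝ → lp (fun _ : J => ℂ) 1) : ℝ → lp (fun _ : J => ℂ) 1 := fun s =>
  (∑' k : ℕ, Complex.exp (-lam * k) •
      ∫ t in Icc (0 : ℝ) 1, Complex.exp (-lam * (t + 1 - s)) • (B ^ (k + 1)) (f t)) +
    ∫ t in Icc s 1, Complex.exp (lam * (s - t)) • f t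

lemma norm_cexp_mul_ofReal_le_one {lam : ℂ} (hlam : 0 ≤ lam.re) {x : ℝ} (hx : x ≤ 0) :
    ‖Complex.exp (lam * x)‖ ≤ 1 := by
  rw [Complex.norm_exp, Real.exp_le_one_iff]
  simpa using mul_nonpos_of_nonneg_of_nonpos hlam hx

lemma norm_cexp_neg_mul_natCast (lam : ℂ) (k : ℕ) :
    ‖Complex.exp (-lam * k)‖ = Real.exp (-lam.re) ^ k := by
  rw [Complex.norm_exp, ← Real.exp_nat_mul]
  simp [mul_comm]

lemma exp_neg_re_lt_one {lam : ℂ} (hlam : 0 < lam.re) : Real.exp (-lam.re) < 1 :=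
  Real.exp_lt_one_iff.2 (neg_lt_zero.2 hlam)

lemma inv_one_sub_exp_neg_re_nonneg {lam : ℂ} (hlam : 0 < lam.re) :
    0 ≤ (1 - Real.exp (-lam.re))⁻¹ :=
  inv_nonneg.2 (sub_nonneg.2 (exp_neg_re_lt_one hlam).le)

section Series

variable {E : Type*} [NormedAddCommGroup E] [NormedSpace ℂ E] {lam : ℂ} {B : E →L[ℂ] E}

lemma norm_pow_succ_apply_le (hB : ‖B‖ ≤ 1) (k : ℕ) (v : E) : ‖(B ^ (k + 1)) v‖ ≤ ‖v‖ := by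
  simpa using (B ^ (k + 1)).le_of_opNorm_le
    ((norm_pow_le' B k.succ_pos).trans (pow_le_one₀ (norm_nonneg B) hB)) v

lemma norm_cexp_smul_pow_succ_apply_le (hB : ‖B‖ ≤ 1) (k : ℕ) (v : E) :
    ‖Complex.exp (-lam * k) • (B ^ (k + 1)) v‖ ≤ Real.exp (-lam.re) ^ k * ‖v‖ := by
  rw [norm_smul, norm_cexp_neg_mul_natCast]
  exact mul_le_mul_of_nonneg_left (norm_pow_succ_apply_le hB k v) (by positivity)

lemma summable_geometric_exp_neg_re (hlam : 0 < lam.re) :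
    Summable fun k : ℕ => Real.exp (-lam.re) ^ k :=
  summable_geometric_of_lt_one (Real.exp_pos _).le (exp_neg_re_lt_one hlam)

lemma summable_norm_cexp_smul_pow_succ_apply (hlam : 0 < lam.re) (hB : ‖B‖ ≤ 1) (v : E) :
    Summable fun k : ℕ => ‖Complex.exp (-lam * k) • (B ^ (k + 1)) v‖ :=
  .of_nonneg_of_le (fun _ => norm_nonneg _) (norm_cexp_smul_pow_succ_apply_le hB · v)
    ((summable_geometric_exp_neg_re hlam).mul_right _)

lemma norm_tsum_cexp_smul_pow_succ_apply_le (hlam : 0 < lam.re) (hB : ‖B‖ ≤ 1) (v : E) :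
    ‖∑' k : ℕ, Complex.exp (-lam * k) • (B ^ (k + 1)) v‖
      ≤ (1 - Real.exp (-lam.re))⁻¹ * ‖v‖ :=
  calc ‖∑' k : ℕ, Complex.exp (-lam * k) • (B ^ (k + 1)) v‖
      ≤ ∑' k : ℕ, ‖Complex.exp (-lam * k) • (B ^ (k + 1)) v‖ :=
        norm_tsum_le_tsum_norm (summable_norm_cexp_smul_pow_succ_apply hlam hB v)
    _ ≤ ∑' k : ℕ, Real.exp (-lam.re) ^ k * ‖v‖ :=
        (summable_norm_cexp_smul_pow_succ_apply hlam hB v).tsum_le_tsum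
          (norm_cexp_smul_pow_succ_apply_le hB · v)
          ((summable_geometric_exp_neg_re hlam).mul_right _)
    _ = (1 - Real.exp (-lam.re))⁻¹ * ‖v‖ := by
        rw [tsum_mul_right, tsum_geometric_of_lt_one (Real.exp_pos _).le (exp_neg_re_lt_one hlam)]

lemma tsum_cexp_smul_pow_succ_apply_add [CompleteSpace E] (hlam : 0 < lam.re) (hB : ‖B‖ ≤ 1)
    (v w : E) :
    ∑' k : ℕ, Complex.exp (-lam * k) • (B ^ (k + 1)) (v + w)
      = (∑' k : ℕ, Complex.exp (-lam * k) • (B ^ (k + 1)) v)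
        + ∑' k : ℕ, Complex.exp (-lam * k) • (B ^ (k + 1)) w := by
  simp only [map_add, smul_add]
  exact (summable_norm_cexp_smul_pow_succ_apply hlam hB v).of_norm.tsum_add
    (summable_norm_cexp_smul_pow_succ_apply hlam hB w).of_norm

end Series

section Kernel

variable {E : Type*} [NormedAddCommGroup E] [NormedSpace ℂ E]

lemma norm_integral_smul_le_integral_norm {α : Type*} [MeasurableSpace α] {μ : Measure α}
    {c : α → ℂ} {f : α → E} (hf : Integrable f μ) (hc : ∀ᵐ t ∂μ, ‖c t‖ ≤ 1) :
    ‖∫ t, c t • f t ∂μ‖ ≤ ∫ t, ‖f t‖ ∂μ :=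
  norm_integral_le_of_norm_le hf.norm <| hc.mono fun t ht => by
    rw [norm_smul]
    exact mul_le_of_le_one_left (norm_nonneg _) ht

lemma ContinuousLinearMap.integral_smul_comp_comm [CompleteSpace E] {F : Type*}
    [NormedAddCommGroup F] [NormedSpace ℂ F] [CompleteSpace F] {α : Type*} [MeasurableSpace α]
    {μ : Measure α}
    (T : E →L[ℂ] F) {c : α → ℂ} {f : α → E}
    (h : Integrable (fun t => c t • f t) μ) :
    ∫ t, c t • T (f t) ∂μ = T (∫ t, c t • f t ∂μ) := by
  simp_rw [← T.map_smul]
  exact T.integral_comp_comm h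

-- In lemma names, `headKernel` is `e^{−λ(t+1−s)}` and `tailKernel` is `e^{λ(s−t)}`.
variable {lam : ℂ} {s : ℝ} {f : ℝ → E}

lemma ae_norm_headKernel_le_one (hlam : 0 ≤ lam.re) (hs : s ≤ 1) :
    ∀ᵐ t : ℝ ∂volume.restrict (Icc (0 : ℝ) 1), ‖Complex.exp (-lam * (t + 1 - s))‖ ≤ 1 :=
  ae_restrict_of_forall_mem measurableSet_Icc fun t ht => by
    rw [show -lam * (t + 1 - s) = lam * ((s - t - 1 : ℝ) : ℂ) by push_cast; ring]
    exact norm_cexp_mul_ofReal_le_one hlam (by linarith [ht.1])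

lemma ae_norm_tailKernel_le_one (hlam : 0 ≤ lam.re) :
    ∀ᵐ t : ℝ ∂volume.restrict (Icc s 1), ‖Complex.exp (lam * (s - t))‖ ≤ 1 :=
  ae_restrict_of_forall_mem measurableSet_Icc fun t ht => by
    rw [show lam * (s - t) = lam * ((s - t : ℝ) : ℂ) by push_cast; ring]
    exact norm_cexp_mul_ofReal_le_one hlam (by linarith [ht.1])

lemma integrable_headKernel_smul (hlam : 0 ≤ lam.re) (hs : s ≤ 1)
    (hf : IntegrableOn f (Icc (0 : ℝ) 1)) :
    Integrable (fun t : ℝ => Complex.exp (-lam * (t + 1 - s)) • f t)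
      (volume.restrict (Icc (0 : ℝ) 1)) :=
  hf.bdd_smul 1 (by fun_prop) (ae_norm_headKernel_le_one hlam hs)

lemma integrable_tailKernel_smul (hlam : 0 ≤ lam.re) (hs : 0 ≤ s)
    (hf : IntegrableOn f (Icc (0 : ℝ) 1)) :
    Integrable (fun t : ℝ => Complex.exp (lam * (s - t)) • f t) (volume.restrict (Icc s 1)) :=
  (hf.mono_set (Icc_subset_Icc_left hs)).bdd_smul 1 (by fun_prop) (ae_norm_tailKernel_le_one hlam)

lemma norm_integral_headKernel_smul_le (hlam : 0 ≤ lam.re) (hs : s ≤ 1)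
    (hf : IntegrableOn f (Icc (0 : ℝ) 1)) :
    ‖∫ t in Icc (0 : ℝ) 1, Complex.exp (-lam * (t + 1 - s)) • f t‖ ≤ ∫ t in Icc (0 : ℝ) 1, ‖f t‖ :=
  norm_integral_smul_le_integral_norm hf (ae_norm_headKernel_le_one hlam hs)

lemma norm_integral_tailKernel_smul_le (hlam : 0 ≤ lam.re) (hs : 0 ≤ s)
    (hf : IntegrableOn f (Icc (0 : ℝ) 1)) :
    ‖∫ t in Icc s 1, Complex.exp (lam * (s - t)) • f t‖ ≤ ∫ t in Icc (0 : ℝ) 1, ‖f t‖ :=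
  (norm_integral_smul_le_integral_norm (hf.mono_set (Icc_subset_Icc_left hs))
    (ae_norm_tailKernel_le_one hlam)).trans
    (setIntegral_mono_set hf.norm (ae_of_all _ fun _ => norm_nonneg _)
      (Icc_subset_Icc_left hs).eventuallyLE)

end Kernel

section Resolvent

variable {J : Type*} {lam : ℂ} {B : lp (fun _ : J => ℂ) 1 →L[ℂ] lp (fun _ : J => ℂ) 1}
  {f g : ℝ → lp (fun _ : J => ℂ) 1} {s : ℝ}

lemma integral_headKernel_smul_pow_succ_apply (hlam : 0 ≤ lam.re) (hs : s ≤ 1)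
    (hf : IntegrableOn f (Icc (0 : ℝ) 1)) (k : ℕ) :
    ∫ t in Icc (0 : ℝ) 1, Complex.exp (-lam * (t + 1 - s)) • (B ^ (k + 1)) (f t)
      = (B ^ (k + 1)) (∫ t in Icc (0 : ℝ) 1, Complex.exp (-lam * (t + 1 - s)) • f t) :=
  (B ^ (k + 1)).integral_smul_comp_comm (integrable_headKernel_smul hlam hs hf)

lemma resolventFormula_eq (hlam : 0 ≤ lam.re) (hs : s ≤ 1) (hf : IntegrableOn f (Icc (0 : ℝ) 1)) :
    resolventFormula lam B f s
      = (∑' k : ℕ, Complex.exp (-lam * k) •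
          (B ^ (k + 1)) (∫ t in Icc (0 : ℝ) 1, Complex.exp (-lam * (t + 1 - s)) • f t))
        + ∫ t in Icc s 1, Complex.exp (lam * (s - t)) • f t := by
  simp only [resolventFormula, integral_headKernel_smul_pow_succ_apply hlam hs hf]

lemma resolventFormula_add (hlam : 0 < lam.re) (hB : ‖B‖ ≤ 1)
    (hf : IntegrableOn f (Icc (0 : ℝ) 1)) (hg : IntegrableOn g (Icc (0 : ℝ) 1))
    (hs : s ∈ Icc (0 : ℝ) 1) :
    resolventFormula lam B (f + g) s = resolventFormula lam B f s + resolventFormula lam B g s := by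
  rw [resolventFormula_eq hlam.le hs.2 hf, resolventFormula_eq hlam.le hs.2 hg,
    resolventFormula_eq hlam.le hs.2 (hf.add hg)]
  simp only [Pi.add_apply, smul_add]
  rw [integral_add (integrable_headKernel_smul hlam.le hs.2 hf)
      (integrable_headKernel_smul hlam.le hs.2 hg),
    integral_add (integrable_tailKernel_smul hlam.le hs.1 hf)
      (integrable_tailKernel_smul hlam.le hs.1 hg),
    tsum_cexp_smul_pow_succ_apply_add hlam hB]
  abel

lemma resolventFormula_smul (c : ℂ) :
    resolventFormula lam B (c • f) s = c • resolventFormula lam B f s := by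
  simp only [resolventFormula, Pi.smul_apply, map_smul, smul_comm _ c, integral_smul,
    tsum_const_smul'', smul_add]

lemma norm_resolventFormula_le (hlam : 0 < lam.re) (hB : ‖B‖ ≤ 1)
    (hf : IntegrableOn f (Icc (0 : ℝ) 1)) (hs : s ∈ Icc (0 : ℝ) 1) :
    ‖resolventFormula lam B f s‖
      ≤ ((1 - Real.exp (-lam.re))⁻¹ + 1) * ∫ t in Icc (0 : ℝ) 1, ‖f t‖ := by
  rw [resolventFormula_eq hlam.le hs.2 hf, add_mul, one_mul]
  refine (norm_add_le _ _).trans (add_le_add ?_ (norm_integral_tailKernel_smul_le hlam.le hs.1 hf))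
  exact (norm_tsum_cexp_smul_pow_succ_apply_le hlam hB _).trans
    (mul_le_mul_of_nonneg_left (norm_integral_headKernel_smul_le hlam.le hs.2 hf)
      (inv_one_sub_exp_neg_re_nonneg hlam))

lemma eLpNorm_resolventFormula_le (hlam : 0 < lam.re) (hB : ‖B‖ ≤ 1)
    (hf : MemLp f ∞ (volume.restrict (Icc (0 : ℝ) 1))) :
    eLpNorm (resolventFormula lam B f) ∞ (volume.restrict (Icc (0 : ℝ) 1))
      ≤ ENNReal.ofReal ((1 - Real.exp (-lam.re))⁻¹ + 1)
        * eLpNorm f ∞ (volume.restrict (Icc (0 : ℝ) 1)) := by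
  have : IsProbabilityMeasure (volume.restrict (Icc (0 : ℝ) 1)) := ⟨by simp⟩
  have hfi : IntegrableOn f (Icc (0 : ℝ) 1) := hf.integrable le_top
  calc eLpNorm (resolventFormula lam B f) ∞ (volume.restrict (Icc (0 : ℝ) 1))
      ≤ ENNReal.ofReal (((1 - Real.exp (-lam.re))⁻¹ + 1) * ∫ t in Icc (0 : ℝ) 1, ‖f t‖) := by
        rw [eLpNorm_exponent_top]
        exact eLpNormEssSup_le_of_ae_bound (ae_restrict_of_forall_mem measurableSet_Icc
          fun s hs => norm_resolventFormula_le hlam hB hfi hs)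
    _ ≤ ENNReal.ofReal ((1 - Real.exp (-lam.re))⁻¹ + 1)
          * eLpNorm f 1 (volume.restrict (Icc (0 : ℝ) 1)) := by
        rw [ENNReal.ofReal_mul' (integral_nonneg fun _ => norm_nonneg _),
          ofReal_integral_norm_eq_lintegral_enorm hfi, eLpNorm_one_eq_lintegral_enorm]
    _ ≤ ENNReal.ofReal ((1 - Real.exp (-lam.re))⁻¹ + 1)
          * eLpNorm f ∞ (volume.restrict (Icc (0 : ℝ) 1)) := by
        gcongr
        exact eLpNorm_le_eLpNorm_of_exponent_le le_top hf.1

end Resolvent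

theorem stmt_10_general {J : Type*} (lam : ℂ) (hlam : 0 < lam.re)
    (B : lp (fun _ : J => ℂ) 1 →L[ℂ] lp (fun _ : J => ℂ) 1) (hB : ‖B‖ = 1) :
    (∀ f : ℝ → lp (fun _ : J => ℂ) 1,
        MemLp f ∞ (volume.restrict (Icc (0 : ℝ) 1)) → ∀ s ∈ Icc (0 : ℝ) 1,
        Summable fun k : ℕ => ‖Complex.exp (-lam * k) •
          ∫ t in Icc (0 : ℝ) 1, Complex.exp (-lam * (t + 1 - s)) • (B ^ (k + 1)) (f t)‖) ∧
    (∀ f g : ℝ → lp (fun _ : J => ℂ) 1,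
        MemLp f ∞ (volume.restrict (Icc (0 : ℝ) 1)) →
        MemLp g ∞ (volume.restrict (Icc (0 : ℝ) 1)) → ∀ s ∈ Icc (0 : ℝ) 1,
        resolventFormula lam B (f + g) s
          = resolventFormula lam B f s + resolventFormula lam B g s) ∧
    (∀ (c : ℂ) (f : ℝ → lp (fun _ : J => ℂ) 1),
        MemLp f ∞ (volume.restrict (Icc (0 : ℝ) 1)) → ∀ s ∈ Icc (0 : ℝ) 1,
        resolventFormula lam B (c • f) s = c • resolventFormula lam B f s) ∧
    (∃ C : ℝ, 0 ≤ C ∧ ∀ f : ℝ → lp (fun _ : J => ℂ) 1,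
        MemLp f ∞ (volume.restrict (Icc (0 : ℝ) 1)) →
        eLpNorm (resolventFormula lam B f) ∞ (volume.restrict (Icc (0 : ℝ) 1))
          ≤ ENNReal.ofReal C * eLpNorm f ∞ (volume.restrict (Icc (0 : ℝ) 1))) := by
  refine ⟨fun f hf s hs => ?_,
    fun f g hf hg s hs =>
      resolventFormula_add hlam hB.le (hf.integrable le_top) (hg.integrable le_top) hs,
    fun c f _ s _ => resolventFormula_smul c,
    ⟨_, add_nonneg (inv_one_sub_exp_neg_re_nonneg hlam) zero_le_one,
      fun f hf => eLpNorm_resolventFormula_le hlam hB.le hf⟩⟩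
  simp only [integral_headKernel_smul_pow_succ_apply hlam.le hs.2 (hf.integrable le_top)]
  exact summable_norm_cexp_smul_pow_succ_apply hlam hB.le _

/-- For `Re(λ) > 0` and a column-stochastic matrix `B` on `ℓ¹` (so `‖B‖ = 1`), the series
`∑_{k} e^{−λk} ∫₀¹ e^{−λ(t+1−s)} B^{k+1} f(t) dt` converges absolutely in `ℓ¹` for every
`f ∈ L^∞([0,1], ℓ¹)` and `s ∈ [0,1]`, and the formula `R(λ)` defines a bounded linear
operator on `L^∞([0,1], ℓ¹)`. -/
theorem stmt_10 {J : Type*} [Countable J] (lam : ℂ) (hlam : 0 < lam.re)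
    (B : lp (fun _ : J => ℂ) 1 →L[ℂ] lp (fun _ : J => ℂ) 1) (hB : ‖B‖ = 1) :
    (∀ f : ℝ → lp (fun _ : J => ℂ) 1,
        MemLp f ∞ (volume.restrict (Icc (0 : ℝ) 1)) → ∀ s ∈ Icc (0 : ℝ) 1,
        Summable fun k : ℕ => ‖Complex.exp (-lam * k) •
          ∫ t in Icc (0 : ℝ) 1, Complex.exp (-lam * (t + 1 - s)) • (B ^ (k + 1)) (f t)‖) ∧
    (∀ f g : ℝ → lp (fun _ : J => ℂ) 1,
        MemLp f ∞ (volume.restrict (Icc (0 : ℝ) 1)) →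
        MemLp g ∞ (volume.restrict (Icc (0 : ℝ) 1)) → ∀ s ∈ Icc (0 : ℝ) 1,
        resolventFormula lam B (f + g) s
          = resolventFormula lam B f s + resolventFormula lam B g s) ∧
    (∀ (c : ℂ) (f : ℝ → lp (fun _ : J => ℂ) 1),
        MemLp f ∞ (volume.restrict (Icc (0 : ℝ) 1)) → ∀ s ∈ Icc (0 : ℝ) 1,
        resolventFormula lam B (c • f) s = c • resolventFormula lam B f s) ∧
    (∃ C : ℝ, 0 ≤ C ∧ ∀ f : ℝ → lp (fun _ : J => ℂ) 1,
        MemLp f ∞ (volume.restrict (Icc (0 : ℝ) 1)) →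
        eLpNorm (resolventFormula lam B f) ∞ (volume.restrict (Icc (0 : ℝ) 1))
          ≤ ENNReal.ofReal C * eLpNorm f ∞ (volume.restrict (Icc (0 : ℝ) 1))) :=
  stmt_10_general lam hlam B hB
end

section
/- Let D ⊆ X' be the set of functions in W^{1,∞}([0,1], ℂ^m) vanishing at both endpoints. Then D is bi-dense in L^∞([0,1], ℂ^m): for every f ∈ L^∞([0,1], ℂ^m) there exists a norm-bounded sequence (f_n) in D converging to f in the weak*-topology induced by L¹([0,1], ℂ^m). -/
open MeasureTheory Set Filter Metric Topology
open scoped NNReal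

/-! Extend `f` by zero outside `[a, b]`, cut it off at distance `2r` from the endpoints and take
its Steklov average `x ↦ (2r)⁻¹ ∫_{x-r}^{x+r} f`. This is Lipschitz (a difference of translates of
the primitive of a bounded function), bounded by `sup ‖f‖`, and vanishes at `a` and `b`. As `r → 0`
the cutoff becomes invisible near every interior point, so Lebesgue's differentiation theorem gives
convergence to `f` almost everywhere, and dominated convergence upgrades bounded a.e. convergence
to weak* convergence against `L¹`. -/

lemma MeasureTheory.LocallyIntegrable.intervalIntegrable {E : Type*} [NormedAddCommGroup E]
    {f : ℝ → E} (hf : LocallyIntegrable f) (a b : ℝ) : IntervalIntegrable f volume a b :=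
  (hf.integrableOn_isCompact isCompact_uIcc).intervalIntegrable

section Steklov

variable {E : Type*} [NormedAddCommGroup E] [NormedSpace ℝ E]

noncomputable def steklovAverage (f : ℝ → E) (r x : ℝ) : E :=
  (2 * r)⁻¹ • ∫ s in (x - r)..(x + r), f s

lemma steklovAverage_eq_setAverage (f : ℝ → E) {r : ℝ} (hr : 0 < r) (x : ℝ) :
    steklovAverage f r x = ⨍ y in closedBall x r, f y := by
  rw [steklovAverage, setAverage_eq, Real.volume_real_closedBall hr.le, Real.closedBall_eq_Icc,
    integral_Icc_eq_integral_Ioc, ← intervalIntegral.integral_of_le (by linarith)]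

lemma steklovAverage_congr {f g : ℝ → E} {r x : ℝ} (hr : 0 ≤ r)
    (h : EqOn f g (Icc (x - r) (x + r))) : steklovAverage f r x = steklovAverage g r x := by
  rw [steklovAverage, steklovAverage,
    intervalIntegral.integral_congr (by rwa [uIcc_of_le (by linarith)])]

lemma steklovAverage_eq_zero_of_eqOn {f : ℝ → E} {r x : ℝ} (hr : 0 ≤ r)
    (h : EqOn f 0 (Icc (x - r) (x + r))) : steklovAverage f r x = 0 := by
  rw [steklovAverage_congr hr h]
  simp [steklovAverage]

lemma norm_steklovAverage_le {f : ℝ → E} {C : ℝ} (hC : ∀ y, ‖f y‖ ≤ C) {r : ℝ} (hr : 0 < r)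
    (x : ℝ) : ‖steklovAverage f r x‖ ≤ C := by
  have hint : ‖∫ s in (x - r)..(x + r), f s‖ ≤ C * (2 * r) := by
    have h := intervalIntegral.norm_integral_le_of_norm_le_const (a := x - r) (b := x + r)
      fun y _ => hC y
    rwa [show x + r - (x - r) = 2 * r by ring, abs_of_pos (by positivity)] at h
  rw [steklovAverage, norm_smul, norm_inv, Real.norm_of_nonneg (by positivity),
    inv_mul_le_iff₀ (by positivity)]
  linarith

lemma lipschitzWith_primitive {f : ℝ → E} (hf : LocallyIntegrable f) {C : ℝ≥0}
    (hC : ∀ y, ‖f y‖ ≤ C) (a : ℝ) : LipschitzWith C fun x => ∫ s in a..x, f s := by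
  refine LipschitzWith.of_dist_le_mul fun x y => ?_
  rw [dist_eq_norm, intervalIntegral.integral_interval_sub_left (hf.intervalIntegrable _ _)
    (hf.intervalIntegrable _ _), Real.dist_eq]
  exact intervalIntegral.norm_integral_le_of_norm_le_const fun y _ => hC y

lemma exists_lipschitzWith_steklovAverage {f : ℝ → E} (hf : LocallyIntegrable f) {C : ℝ}
    (hC : ∀ y, ‖f y‖ ≤ C) (r : ℝ) : ∃ K, LipschitzWith K (steklovAverage f r) := by
  have hP := lipschitzWith_primitive hf (fun y => (hC y).trans (Real.le_coe_toNNReal C)) 0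
  have hshift (c : ℝ) : LipschitzWith 1 fun x : ℝ => x + c := (isometry_add_right c).lipschitz
  have heq : steklovAverage f r = fun x =>
      (2 * r)⁻¹ • ((∫ s in (0 : ℝ)..(x + r), f s) - ∫ s in (0 : ℝ)..(x - r), f s) := by
    ext x
    rw [steklovAverage, intervalIntegral.integral_interval_sub_left (hf.intervalIntegrable _ _)
      (hf.intervalIntegrable _ _)]
  rw [heq]
  exact ⟨_, (lipschitzWith_smul _).comp
    ((hP.comp (hshift r)).sub (hP.comp (by simpa [sub_eq_add_neg] using hshift (-r))))⟩

theorem ae_tendsto_steklovAverage [CompleteSpace E] {f : ℝ → E} (hf : LocallyIntegrable f)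
    {ι : Type*} {l : Filter ι} {r : ι → ℝ} (hr : Tendsto r l (𝓝[>] 0)) :
    ∀ᵐ x, Tendsto (fun i => steklovAverage f (r i) x) l (𝓝 (f x)) := by
  have hpos : ∀ᶠ i in l, 0 < r i := hr.eventually self_mem_nhdsWithin
  filter_upwards [IsUnifLocDoublingMeasure.ae_tendsto_average volume hf 1] with x hx
  refine (hx (fun _ => x) r hr ?_).congr' ?_
  · filter_upwards [hpos] with i hi
    simpa using hi.le
  · filter_upwards [hpos] with i hi
    exact (steklovAverage_eq_setAverage f hi x).symm

lemma steklovAverage_indicator_Icc_left (f : ℝ → E) {a b r : ℝ} (hr : 0 < r) :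
    steklovAverage ((Icc (a + 2 * r) (b - 2 * r)).indicator f) r a = 0 :=
  steklovAverage_eq_zero_of_eqOn hr.le fun _ hy =>
    indicator_of_notMem (fun h => by linarith [hy.2, h.1]) _

lemma steklovAverage_indicator_Icc_right (f : ℝ → E) {a b r : ℝ} (hr : 0 < r) :
    steklovAverage ((Icc (a + 2 * r) (b - 2 * r)).indicator f) r b = 0 :=
  steklovAverage_eq_zero_of_eqOn hr.le fun _ hy =>
    indicator_of_notMem (fun h => by linarith [hy.1, h.2]) _

lemma eventually_steklovAverage_indicator_Icc_eq (f : ℝ → E) {a b x : ℝ} (hx : x ∈ Ioo a b)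
    {ι : Type*} {l : Filter ι} {r : ι → ℝ} (hr : Tendsto r l (𝓝[>] 0)) :
    ∀ᶠ i in l, steklovAverage ((Icc (a + 2 * r i) (b - 2 * r i)).indicator f) (r i) x =
      steklovAverage f (r i) x := by
  have hδ : 0 < min (x - a) (b - x) / 3 :=
    div_pos (lt_min (sub_pos.2 hx.1) (sub_pos.2 hx.2)) three_pos
  filter_upwards [hr.eventually self_mem_nhdsWithin,
    (tendsto_nhds_of_tendsto_nhdsWithin hr).eventually (gt_mem_nhds hδ)] with i hpos hsmall
  refine steklovAverage_congr hpos.le fun y hy => indicator_of_mem ?_ _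
  have := min_le_left (x - a) (b - x)
  have := min_le_right (x - a) (b - x)
  constructor <;> linarith [hy.1, hy.2]

theorem exists_lipschitzWith_tendsto_ae [CompleteSpace E] {f : ℝ → E} {a b M : ℝ} (hab : a ≤ b)
    (hfM : ∀ x ∈ Icc a b, ‖f x‖ ≤ M) (hf : AEStronglyMeasurable f (volume.restrict (Icc a b))) :
    ∃ F : ℕ → ℝ → E, (∀ n, ∃ K, LipschitzWith K (F n)) ∧ (∀ n, F n a = 0 ∧ F n b = 0) ∧
      (∀ n x, ‖F n x‖ ≤ M) ∧
      ∀ᵐ x ∂volume.restrict (Icc a b), Tendsto (fun n => F n x) atTop (𝓝 (f x)) := by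
  have hM : 0 ≤ M := (norm_nonneg _).trans (hfM a ⟨le_rfl, hab⟩)
  set f₀ := (Icc a b).indicator f
  have hf₀M (y : ℝ) : ‖f₀ y‖ ≤ M := by
    by_cases hy : y ∈ Icc a b
    · simpa [f₀, hy] using hfM y hy
    · simpa [f₀, hy] using hM
  have hf₀ : Integrable f₀ := (integrable_indicator_iff measurableSet_Icc).2 <|
    IntegrableOn.of_bound measure_Icc_lt_top hf M
      ((ae_restrict_mem measurableSet_Icc).mono fun x hx => hfM x hx)
  set r : ℕ → ℝ := fun n => 1 / ((n : ℝ) + 1)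
  have hr (n : ℕ) : 0 < r n := by positivity
  have hr0 : Tendsto r atTop (𝓝[>] 0) :=
    tendsto_nhdsWithin_iff.2 ⟨tendsto_one_div_add_atTop_nhds_zero_nat, .of_forall hr⟩
  set g : ℕ → ℝ → E := fun n => (Icc (a + 2 * r n) (b - 2 * r n)).indicator f₀
  have hgM (n : ℕ) (y : ℝ) : ‖g n y‖ ≤ M :=
    (norm_indicator_le_norm_self (f := f₀) (a := y)).trans (hf₀M y)
  have hg (n : ℕ) : LocallyIntegrable (g n) :=
    (hf₀.indicator measurableSet_Icc).locallyIntegrable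
  refine ⟨fun n => steklovAverage (g n) (r n),
    fun n => exists_lipschitzWith_steklovAverage (hg n) (hgM n) (r n),
    fun n => ⟨steklovAverage_indicator_Icc_left f₀ (hr n),
      steklovAverage_indicator_Icc_right f₀ (hr n)⟩,
    fun n x => norm_steklovAverage_le (hgM n) (hr n) x, ?_⟩
  rw [Measure.restrict_congr_set Ioo_ae_eq_Icc.symm]
  filter_upwards [ae_restrict_of_ae (ae_tendsto_steklovAverage hf₀.locallyIntegrable hr0),
    ae_restrict_mem measurableSet_Ioo] with x hx hxI
  rw [← indicator_of_mem (Ioo_subset_Icc_self hxI) f]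
  exact hx.congr' <|
    (eventually_steklovAverage_indicator_Icc_eq f₀ hxI hr0).mono fun _ h => h.symm

end Steklov

lemma EuclideanSpace.norm_sum_mul_le {𝕜 ι : Type*} [RCLike 𝕜] [Fintype ι]
    (v w : EuclideanSpace 𝕜 ι) : ‖∑ i, v i * w i‖ ≤ ‖v‖ * ‖w‖ :=
  calc ‖∑ i, v i * w i‖ ≤ ∑ i, ‖v i‖ * ‖w i‖ :=
        norm_sum_le_of_le _ fun i _ => norm_mul_le _ _
    _ ≤ √(∑ i, ‖v i‖ ^ 2) * √(∑ i, ‖w i‖ ^ 2) := Real.sum_mul_le_sqrt_mul_sqrt _ _ _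
    _ = ‖v‖ * ‖w‖ := by simp only [EuclideanSpace.norm_eq]

theorem tendsto_integral_sum_mul_of_tendsto_ae {α 𝕜 ι : Type*} [MeasurableSpace α]
    {μ : Measure α} [RCLike 𝕜] [Fintype ι] {u : ℕ → α → EuclideanSpace 𝕜 ι}
    {g : α → EuclideanSpace 𝕜 ι} {C : ℝ} (hu : ∀ n, AEStronglyMeasurable (u n) μ)
    (huC : ∀ n, ∀ᵐ x ∂μ, ‖u n x‖ ≤ C) (hlim : ∀ᵐ x ∂μ, Tendsto (fun n => u n x) atTop (𝓝 0))
    (hg : Integrable g μ) :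
    Tendsto (fun n => ∫ x, ∑ i, u n x i * g x i ∂μ) atTop (𝓝 0) := by
  have hpair : Continuous fun p : EuclideanSpace 𝕜 ι × EuclideanSpace 𝕜 ι =>
      ∑ i, p.1 i * p.2 i := by
    fun_prop
  have hbound (n : ℕ) : ∀ᵐ x ∂μ, ‖∑ i, u n x i * g x i‖ ≤ C * ‖g x‖ := by
    filter_upwards [huC n] with x hx
    exact (EuclideanSpace.norm_sum_mul_le _ _).trans
      (mul_le_mul_of_nonneg_right hx (norm_nonneg _))
  have hpointwise : ∀ᵐ x ∂μ, Tendsto (fun n => ∑ i, u n x i * g x i) atTop (𝓝 0) := by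
    filter_upwards [hlim] with x hx
    simpa [Function.comp_def] using
      (hpair.tendsto (0, g x)).comp (hx.prodMk_nhds tendsto_const_nhds)
  simpa using tendsto_integral_of_dominated_convergence _
    (fun n => hpair.comp_aestronglyMeasurable ((hu n).prodMk hg.aestronglyMeasurable))
    (hg.norm.const_mul C) hbound hpointwise

/-- The set `D` of functions in `W^{1,∞}([0,1], ℂ^m)` (i.e. Lipschitz functions on `[0,1]`)
vanishing at both endpoints is bi-dense in `L^∞([0,1], ℂ^m)`: for every
`f ∈ L^∞([0,1], ℂ^m)` there exists a norm-bounded sequence `(f_n)` in `D` converging to `f`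
in the weak*-topology induced by `L¹([0,1], ℂ^m)` via the pairing
`⟨f,g⟩ = ∫₀¹ ⟨f(s), g(s)⟩ ds`. -/
theorem stmt_14 {m : ℕ} (f : ℝ → EuclideanSpace ℂ (Fin m)) (M : ℝ)
    (hfM : ∀ x ∈ Icc (0 : ℝ) 1, ‖f x‖ ≤ M)
    (hfmeas : AEStronglyMeasurable f (volume.restrict (Icc (0 : ℝ) 1))) :
    ∃ F : ℕ → ℝ → EuclideanSpace ℂ (Fin m),
      (∀ n, ∃ K : NNReal, LipschitzOnWith K (F n) (Icc (0 : ℝ) 1)) ∧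
      (∀ n, F n 0 = 0 ∧ F n 1 = 0) ∧
      (∃ C : ℝ, ∀ n, ∀ x ∈ Icc (0 : ℝ) 1, ‖F n x‖ ≤ C) ∧
      (∀ g : ℝ → EuclideanSpace ℂ (Fin m), IntegrableOn g (Icc (0 : ℝ) 1) →
        Tendsto (fun n : ℕ => ∫ x in Icc (0 : ℝ) 1, ∑ i, (F n x - f x) i * g x i)
          atTop (nhds 0)) := by
  obtain ⟨F, hLip, hzero, hFM, hlim⟩ := exists_lipschitzWith_tendsto_ae zero_le_one hfM hfmeas
  refine ⟨F, fun n => (hLip n).imp fun K hK => hK.lipschitzOnWith, hzero,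
    ⟨M, fun n x _ => hFM n x⟩, fun g hg => ?_⟩
  refine tendsto_integral_sum_mul_of_tendsto_ae (C := M + M) (fun n => ?_) (fun n => ?_) ?_ hg
  · obtain ⟨K, hK⟩ := hLip n
    exact hK.continuous.aestronglyMeasurable.sub hfmeas
  · filter_upwards [ae_restrict_mem measurableSet_Icc] with x hx
    exact (norm_sub_le _ _).trans (add_le_add (hFM n x) (hfM x hx))
  · filter_upwards [hlim] with x hx
    simpa using hx.sub_const (f x)
end
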